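/- arXiv:2209.04177 — 2 statements merged into one kernel-verified Lean document; each statement's English description precedes it below -/
import Mathlib

section
/- Let F be a field with |F| ≥ k+1 whose characteristic is 0 or greater than d, and let d ≥ k+1. Let ℓ_1,…,ℓ_k ∈ F[x_1,…,x_n] be polynomials of total degree exactly 1 such that for all i ≠ j, ℓ_i is not a scalar multiple of ℓ_j, and let c_1,…,c_k ∈ F all be nonzero. Then the polynomial f = Σ_{i=1}^k c_i·ℓ_i^d is not the zero polynomial. -/
/-!
Pick a variable `x_m` occurring in `ℓ₀` and let `a_i` be the coefficient of `x_m` in `ℓ_i`, so that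
`∂ℓ_i/∂x_m = a_i`. Differentiating `∑ c_i ℓ_i^d = 0` exactly `d - j` times in `x_m` gives
`∑ c_i a_i^(d-j) ℓ_i^j = 0` for every `j ≤ d`, because the falling factorial `d!/j!` is nonzero
in `F`. On the indices with `a_i ≠ 0` this reads `∑ (c_i a_i^d) β_i^j = 0` with `β_i = a_i⁻¹ ℓ_i`,
and the `β_i` are pairwise distinct since the `ℓ_i` are pairwise non-proportional. As `d` exceeds
the number of such indices, the Vandermonde determinant forces every `c_i a_i^d` to vanish,
contradicting `c₀ a₀^d ≠ 0`.
-/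

open MvPolynomial

theorem natCast_ne_zero_of_pos_of_le {F : Type*} [Field F] {d n : ℕ}
    (hchar : CharZero F ∨ d < ringChar F) (hn : 0 < n) (hnd : n ≤ d) : (n : F) ≠ 0 := by
  rcases hchar with h | h
  · exact Nat.cast_ne_zero.2 hn.ne'
  · rw [Ne, ringChar.spec]
    exact fun hdvd => absurd (Nat.le_of_dvd hn hdvd) (by omega)

theorem Nat.cast_descFactorial_ne_zero {F : Type*} [Field F] {d r : ℕ}
    (hchar : CharZero F ∨ d < ringChar F) (hr : r ≤ d) : (d.descFactorial r : F) ≠ 0 := by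
  induction r with
  | zero => simp
  | succ r ih =>
    rw [Nat.descFactorial_succ, Nat.cast_mul]
    exact mul_ne_zero (natCast_ne_zero_of_pos_of_le hchar (by omega) (by omega)) (ih (by omega))

theorem Finset.eq_zero_of_forall_sum_mul_pow_eq_zero {R ι : Type*} [CommRing R] [IsDomain R]
    {s : Finset ι} {γ β : ι → R} (hβ : Set.InjOn β s)
    (h : ∀ j < s.card, ∑ i ∈ s, γ i * β i ^ j = 0) : ∀ i ∈ s, γ i = 0 := by
  set e : Fin s.card ≃ s := s.equivFin.symm
  have hv := Matrix.eq_zero_of_forall_pow_sum_mul_pow_eq_zero (f := fun j => β (e j))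
    (v := fun j => γ (e j)) (fun j j' hjj' => e.injective (Subtype.ext (hβ (e j).2 (e j').2 hjj')))
    fun j => by
      rw [e.sum_comp (fun i => γ i * β i ^ (j : ℕ)), s.sum_coe_sort (fun i => γ i * β i ^ (j : ℕ))]
      exact h j j.2
  intro i hi
  simpa only [Equiv.apply_symm_apply, Pi.zero_apply] using congrFun hv (e.symm ⟨i, hi⟩)

namespace MvPolynomial

variable {σ R : Type*} [CommSemiring R]

theorem exists_coeff_single_one_ne_zero_of_totalDegree_eq_one {p : MvPolynomial σ R}
    (hp : p.totalDegree = 1) : ∃ i, coeff (Finsupp.single i 1) p ≠ 0 := by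
  have hne : p.support.Nonempty := by
    rw [Finset.nonempty_iff_ne_empty, Ne, support_eq_empty]
    rintro rfl
    simp only [totalDegree_zero, zero_ne_one] at hp
  obtain ⟨s, hs, hsdeg⟩ := Finset.exists_mem_eq_sup _ hne fun s => s.sum fun _ e => e
  obtain ⟨i, rfl⟩ := (Finsupp.sum_eq_one_iff s).1 (hsdeg.symm.trans hp)
  exact ⟨i, mem_support_iff.1 hs⟩

theorem pderiv_eq_C_coeff_of_totalDegree_le_one {p : MvPolynomial σ R} (hp : p.totalDegree ≤ 1)
    (i : σ) : pderiv i p = C (coeff (Finsupp.single i 1) p) := by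
  classical
  ext s
  rw [coeff_pderiv, coeff_C]
  split_ifs with hs
  · simp [← hs]
  · rw [coeff_eq_zero_of_totalDegree_lt, zero_mul]
    have hs : 0 < s.degree :=
      Nat.pos_of_ne_zero ((Finsupp.degree_eq_zero_iff s).not.2 (Ne.symm hs))
    rw [← Finsupp.degree_apply, map_add, Finsupp.degree_single]
    omega

theorem pderiv_pow_apply_pow_of_pderiv_eq_C {ℓ : MvPolynomial σ R} {i : σ} {a : R}
    (hℓ : pderiv i ℓ = C a) (d r : ℕ) :
    ((pderiv (R := R) i).toLinearMap ^ r) (ℓ ^ d) =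
      C (d.descFactorial r * a ^ r) * ℓ ^ (d - r) := by
  induction r with
  | zero => simp
  | succ r ih =>
    rw [pow_succ', Module.End.mul_apply, ih, Derivation.coeFn_coe, pderiv_C_mul, pderiv_pow, hℓ,
      Nat.descFactorial_succ, Nat.sub_sub]
    simp only [Nat.cast_mul, map_mul, map_pow, map_natCast]
    ring

theorem sum_C_mul_pow_mul_pow_eq_zero {ι F : Type*} [Field F] [Fintype ι] {d r : ℕ}
    (hchar : CharZero F ∨ d < ringChar F) (hr : r ≤ d) {ℓ : ι → MvPolynomial σ F} {m : σ}
    {a c : ι → F} (hℓ : ∀ i, pderiv m (ℓ i) = C (a i)) (hf : ∑ i, C (c i) * ℓ i ^ d = 0) :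
    ∑ i, C (c i * a i ^ r) * ℓ i ^ (d - r) = 0 := by
  have h := congrArg ((pderiv (R := F) m).toLinearMap ^ r) hf
  simp_rw [map_sum, map_zero, C_mul', map_smul, pderiv_pow_apply_pow_of_pderiv_eq_C (hℓ _)] at h
  have hfac : C (d.descFactorial r : F) ≠ (0 : MvPolynomial σ F) :=
    C_ne_zero.2 (Nat.cast_descFactorial_ne_zero hchar hr)
  refine (mul_eq_zero.1 ?_).resolve_left hfac
  rw [← h, Finset.mul_sum]
  refine Finset.sum_congr rfl fun i _ => ?_
  rw [smul_eq_C_mul, C_mul, C_mul, map_pow]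
  ring

end MvPolynomial

theorem minimal_sum_pow_ne_zero_general {F : Type*} [Field F] (n k d : ℕ) (hk : 1 ≤ k)
    (hchar : CharZero F ∨ d < ringChar F)
    (hd : k + 1 ≤ d)
    (ℓ : Fin k → MvPolynomial (Fin n) F)
    (hdeg : ∀ i, (ℓ i).totalDegree = 1)
    (hpair : ∀ i j, i ≠ j → ∀ c : F, ℓ i ≠ c • ℓ j)
    (c : Fin k → F) (hc : ∀ i, c i ≠ 0) :
    (∑ i, MvPolynomial.C (c i) * (ℓ i) ^ d) ≠ 0 := by
  classical
  intro hf
  obtain ⟨m, ham⟩ := exists_coeff_single_one_ne_zero_of_totalDegree_eq_one (hdeg ⟨0, hk⟩)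
  set a : Fin k → F := fun i => coeff (Finsupp.single m 1) (ℓ i)
  have hℓ i : pderiv m (ℓ i) = C (a i) := pderiv_eq_C_coeff_of_totalDegree_le_one (hdeg i).le m
  set T := Finset.univ.filter fun i => a i ≠ 0
  have hT : T.card ≤ k := (Finset.card_filter_le _ _).trans_eq (Finset.card_fin k)
  have hinj : Set.InjOn (fun i => (a i)⁻¹ • ℓ i) T := by
    intro i hi j _ hij
    have hij : (a i)⁻¹ • ℓ i = (a j)⁻¹ • ℓ j := hij
    by_contra hne
    apply hpair i j hne (a i / a j)
    have hai : a i ≠ 0 := (Finset.mem_filter.1 hi).2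
    rw [div_eq_mul_inv, mul_smul, ← hij, smul_inv_smul₀ hai]
  have hpow j (hj : j < T.card) : ∑ i ∈ T, C (c i * a i ^ d) * ((a i)⁻¹ • ℓ i) ^ j = 0 := by
    rw [← sum_C_mul_pow_mul_pow_eq_zero hchar (Nat.sub_le d j) hℓ hf, Nat.sub_sub_self (by omega)]
    refine (Finset.sum_congr rfl fun i hi => ?_).trans
      (Finset.sum_subset (Finset.subset_univ T) fun i _ hi => ?_)
    · have hai : a i ≠ 0 := (Finset.mem_filter.1 hi).2
      rw [smul_pow, smul_eq_C_mul, ← mul_assoc, ← C_mul, mul_assoc, inv_pow,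
        ← pow_sub₀ _ hai (by omega)]
    · have hai : a i = 0 := by simpa [T] using hi
      rw [hai, zero_pow (by omega), mul_zero, C_0, zero_mul]
  have := Finset.eq_zero_of_forall_sum_mul_pow_eq_zero hinj hpow ⟨0, hk⟩ (by simpa [T] using ham)
  exact mul_ne_zero (hc _) (pow_ne_zero d ham) (C_eq_zero.1 this)

/-- If `|F| ≥ k+1`, `char F = 0` or `char F > d`, `d ≥ k+1`, the `ℓ i` are
polynomials of total degree exactly 1, pairwise not scalar multiples of one another, and all
the coefficients `c i` are nonzero, then `∑ i, c i • (ℓ i)^d` is not the zero polynomial. -/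
theorem minimal_sum_pow_ne_zero {F : Type*} [Field F] (n k d : ℕ) (hk : 1 ≤ k)
    (hF : ((k + 1 : ℕ) : Cardinal) ≤ Cardinal.mk F)
    (hchar : CharZero F ∨ d < ringChar F)
    (hd : k + 1 ≤ d)
    (ℓ : Fin k → MvPolynomial (Fin n) F)
    (hdeg : ∀ i, (ℓ i).totalDegree = 1)
    (hpair : ∀ i j, i ≠ j → ∀ c : F, ℓ i ≠ c • ℓ j)
    (c : Fin k → F) (hc : ∀ i, c i ≠ 0) :
    (∑ i, MvPolynomial.C (c i) * (ℓ i) ^ d) ≠ 0 :=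
  minimal_sum_pow_ne_zero_general n k d hk hchar hd ℓ hdeg hpair c hc
end

section
/- Let F be a field with |F| ≥ 2k+1 whose characteristic is 0 or greater than d, and let d ≥ 2k+1. Suppose f = Σ_{i=1}^k c_i·ℓ_i^d = Σ_{i=1}^k c'_i·a_i^d, where both representations are minimal: all c_i and all c'_i are nonzero, the ℓ_1,…,ℓ_k are polynomials of total degree exactly 1 that are pairwise not scalar multiples of one another, and likewise for a_1,…,a_k. Then there is a permutation π of {1,…,k} such that for every i, ℓ_i is a nonzero scalar multiple of a_{π(i)}. -/
/-!
Moving everything to one side gives a vanishing combination `∑ b i • g i ^ d = 0` of at most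
`2k ≤ d + 1` powers of affine forms. Restricted to a suitable line `t ↦ t • v + w` it becomes
`∑ b i (α i X + β i) ^ d = 0` in one variable, with every `α i ≠ 0` and with the root of `g i₀`
distinct from the roots of the other `g i`; such a line exists because `|F|` exceeds the number
of affine polynomials that must not vanish at `v` (resp. `w`). Comparing coefficients (the
binomial coefficients `d.choose r` are nonzero by the characteristic assumption) gives
`∑ b i α i ^ d γ i ^ r = 0` for `r ≤ d`, where `γ i = β i / α i`, and testing against the nodal
polynomial of the other roots isolates `b i₀ = 0`. Hence each `ℓ i` is proportional to some
`a j`, and pairwise non-proportionality of the `ℓ i` makes this matching injective.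
-/

theorem Nat.cast_choose_ne_zero {R : Type*} [CommRing R] [IsDomain R] {d r : ℕ}
    (hR : CharZero R ∨ d < ringChar R) (hr : r ≤ d) : (d.choose r : R) ≠ 0 := by
  rcases hR with hR | hR
  · exact Nat.cast_ne_zero.mpr (Nat.choose_pos hr).ne'
  · have hp : (ringChar R).Prime :=
      (CharP.char_is_prime_or_zero R (ringChar R)).resolve_right (by omega)
    rw [Ne, CharP.cast_eq_zero_iff R (ringChar R)]
    exact fun hdvd => hp.one_lt.ne' ((hp.coprime_choose_of_lt hR hr).eq_one_of_dvd hdvd)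

namespace Polynomial

variable {R : Type*} [CommRing R] [IsDomain R] {ι : Type*} [Fintype ι] {d : ℕ}

theorem eq_zero_of_sum_C_mul_X_add_C_pow_eq_zero
    (hchoose : ∀ r ≤ d, (d.choose r : R) ≠ 0) (hcard : Fintype.card ι ≤ d + 1)
    {b γ : ι → R} {i₀ : ι} (hγ : ∀ i ≠ i₀, γ i ≠ γ i₀)
    (h : ∑ i, C (b i) * (X + C (γ i)) ^ d = 0) : b i₀ = 0 := by
  classical
  have hmoment : ∀ r ≤ d, ∑ i, b i * γ i ^ r = 0 := by
    intro r hr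
    have hcoeff := congrArg (coeff · (d - r)) h
    simp only [finsetSum_coeff, coeff_C_mul, coeff_X_add_C_pow, coeff_zero,
      Nat.sub_sub_self hr, Nat.choose_symm hr, ← mul_assoc, ← Finset.sum_mul] at hcoeff
    exact (mul_eq_zero.mp hcoeff).resolve_right (hchoose r hr)
  have heval : ∀ q : R[X], q.natDegree ≤ d → ∑ i, b i * q.eval (γ i) = 0 := by
    intro q hq
    simp_rw [eval_eq_sum_range' (Nat.lt_succ_of_le hq), Finset.mul_sum]
    rw [Finset.sum_comm]
    refine Finset.sum_eq_zero fun r hr => ?_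
    simp_rw [mul_left_comm (b _), ← Finset.mul_sum]
    rw [hmoment r (Nat.lt_succ_iff.mp (Finset.mem_range.mp hr)), mul_zero]
  set q := Lagrange.nodal (Finset.univ.erase i₀) γ
  have hq : q.natDegree ≤ d := by
    rw [Lagrange.natDegree_nodal, Finset.card_erase_of_mem (Finset.mem_univ _), Finset.card_univ]
    omega
  have hsum := heval q hq
  rw [Finset.sum_eq_single i₀ (fun i _ hi => by
    rw [Lagrange.eval_nodal_at_node (Finset.mem_erase.mpr ⟨hi, Finset.mem_univ i⟩), mul_zero])
    (by simp)] at hsum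
  exact (mul_eq_zero.mp hsum).resolve_right (Lagrange.eval_nodal_not_at_node fun i hi =>
    (hγ i (Finset.ne_of_mem_erase hi)).symm)

theorem eq_zero_of_sum_C_mul_C_mul_X_add_C_pow_eq_zero {K : Type*} [Field K]
    (hchoose : ∀ r ≤ d, (d.choose r : K) ≠ 0) (hcard : Fintype.card ι ≤ d + 1)
    {b α β : ι → K} {i₀ : ι} (hα : ∀ i, α i ≠ 0) (hαβ : ∀ i ≠ i₀, α i₀ * β i ≠ α i * β i₀)
    (h : ∑ i, C (b i) * (C (α i) * X + C (β i)) ^ d = 0) : b i₀ = 0 := by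
  have hnormal : ∀ i, C (b i) * (C (α i) * X + C (β i)) ^ d =
      C (b i * α i ^ d) * (X + C (β i / α i)) ^ d := fun i => by
    rw [C_mul, C_pow, mul_assoc, ← mul_pow, mul_add, ← C_mul, mul_div_cancel₀ _ (hα i)]
  have hb := eq_zero_of_sum_C_mul_X_add_C_pow_eq_zero hchoose hcard
    (b := fun i => b i * α i ^ d) (γ := fun i => β i / α i) (i₀ := i₀)
    (fun i hi => by
      rw [Ne, div_eq_div_iff (hα i) (hα i₀)]
      exact fun h => hαβ i hi (by linear_combination h))
    (by simpa only [hnormal] using h)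
  exact (mul_eq_zero.mp hb).resolve_right (pow_ne_zero _ (hα i₀))

end Polynomial

namespace MvPolynomial

section CommRing

variable {σ R : Type*} [CommRing R]

theorem eq_C_add_sum_C_mul_X_of_totalDegree_le_one [Fintype σ] {p : MvPolynomial σ R}
    (hp : p.totalDegree ≤ 1) :
    p = C (coeff 0 p) + ∑ j, C (coeff (Finsupp.single j 1) p) * X j := by
  classical
  have hsupp : p.support ⊆ insert 0 (Finset.univ.image fun j => Finsupp.single j 1) := by
    intro m hm
    rcases Nat.le_one_iff_eq_zero_or_eq_one.mp ((le_totalDegree hm).trans hp) with h | h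
    · simp [(Finsupp.degree_eq_zero_iff m).mp h]
    · obtain ⟨j, rfl⟩ := (Finsupp.sum_eq_one_iff m).mp h
      simp
  conv_lhs => rw [p.as_sum, Finset.sum_subset hsupp fun m _ hm => by
    rw [notMem_support_iff.mp hm, monomial_zero]]
  rw [Finset.sum_insert (by simp),
    Finset.sum_image fun _ _ _ _ h => Finsupp.single_left_injective one_ne_zero h]
  simp [C_mul_X_eq_monomial]

theorem aeval_line_of_totalDegree_le_one [Fintype σ] {p : MvPolynomial σ R}
    (hp : p.totalDegree ≤ 1) (v w : σ → R) :
    aeval (fun j => Polynomial.C (v j) * Polynomial.X + Polynomial.C (w j)) p =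
      Polynomial.C (eval v p - constantCoeff p) * Polynomial.X + Polynomial.C (eval w p) := by
  rw [eq_C_add_sum_C_mul_X_of_totalDegree_le_one hp]
  simp only [map_add, map_sum, map_mul, algHom_C, Polynomial.algebraMap_eq, aeval_X, eval_C,
    eval_X, constantCoeff_C, constantCoeff_X, mul_zero, Finset.sum_const_zero, add_zero,
    add_sub_cancel_left, mul_add, Finset.sum_add_distrib, Finset.sum_mul, mul_assoc]
  ring

variable [IsDomain R]

theorem exists_eval_ne_zero_of_totalDegree_lt_card [Finite σ] {p : MvPolynomial σ R}
    (hp : p ≠ 0) (hdeg : (p.totalDegree : Cardinal) < Cardinal.mk R) :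
    ∃ x, eval x p ≠ 0 := by
  obtain ⟨S, hS⟩ := Cardinal.exists_finset_eq_card (n := p.totalDegree + 1)
    (mod_cast Cardinal.natCast_add_one_le_iff.mpr hdeg)
  by_contra! h
  refine hp (eq_zero_of_eval_zero_at_prod_finset p (fun _ => S) (fun i => ?_) fun x _ => h x)
  exact hS ▸ Nat.lt_succ_of_le (degreeOf_le_totalDegree p i)

theorem exists_forall_eval_ne_zero_of_totalDegree_le_one [Finite σ] {ι : Type*} [Fintype ι]
    {q : ι → MvPolynomial σ R} (hq : ∀ i, q i ≠ 0) (hdeg : ∀ i, (q i).totalDegree ≤ 1)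
    (hcard : (Fintype.card ι : Cardinal) < Cardinal.mk R) :
    ∃ x, ∀ i, eval x (q i) ≠ 0 := by
  have hdeg_prod : (∏ i, q i).totalDegree ≤ Fintype.card ι :=
    (totalDegree_finsetProd _ _).trans <| by
      simpa using! Finset.sum_le_card_nsmul _ _ 1 fun i _ => hdeg i
  obtain ⟨x, hx⟩ := exists_eval_ne_zero_of_totalDegree_lt_card
    (Finset.prod_ne_zero_iff.mpr fun i _ => hq i)
    ((Nat.cast_le.mpr hdeg_prod).trans_lt hcard)
  rw [map_prod, Finset.prod_ne_zero_iff] at hx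
  exact ⟨x, fun i => hx i (Finset.mem_univ i)⟩

end CommRing

section Field

variable {K σ : Type*} [Field K] [Fintype σ] {d : ℕ}

theorem eq_zero_of_sum_C_mul_pow_eq_zero {ι : Type*} [Fintype ι]
    (hchoose : ∀ r ≤ d, (d.choose r : K) ≠ 0) (hK : (Fintype.card ι : Cardinal) < Cardinal.mk K)
    (hcard : Fintype.card ι ≤ d + 1) {g : ι → MvPolynomial σ K} {b : ι → K}
    (hg : ∀ i, (g i).totalDegree = 1) {i₀ : ι} (hi₀ : ∀ i ≠ i₀, ∀ t : K, g i₀ ≠ t • g i)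
    (h : ∑ i, C (b i) * g i ^ d = 0) : b i₀ = 0 := by
  classical
  -- a direction `v` along which no `g i` is constant
  obtain ⟨v, hv⟩ := exists_forall_eval_ne_zero_of_totalDegree_le_one
    (q := fun i => g i - C (constantCoeff (g i)))
    (fun i hi => by
      have hdeg := hg i
      rw [sub_eq_zero.mp hi, totalDegree_C] at hdeg
      exact zero_ne_one hdeg)
    (fun i => (totalDegree_sub_C_le _ _).trans (hg i).le) hK
  set α := fun i => eval v (g i) - constantCoeff (g i)
  have hα : ∀ i, α i ≠ 0 := by simpa using hv
  -- a base point `w` separating the root of `g i₀` on the line from those of the other `g i`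
  obtain ⟨w, hw⟩ := exists_forall_eval_ne_zero_of_totalDegree_le_one
    (q := fun i : {i // i ≠ i₀} => C (α i₀) * g i - C (α i) * g i₀)
    (fun i hi => hi₀ i i.2 (α i₀ / α i) <| calc
      g i₀ = C (α i)⁻¹ * (C (α i) * g i₀) := by
        rw [← mul_assoc, ← C_mul, inv_mul_cancel₀ (hα i), C_1, one_mul]
      _ = (α i₀ / α i) • g i := by
        rw [← sub_eq_zero.mp hi, ← mul_assoc, ← C_mul, smul_eq_C_mul, div_eq_inv_mul])
    (fun i => (totalDegree_sub _ _).trans (max_le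
      ((totalDegree_mul _ _).trans (by simp [hg]))
      ((totalDegree_mul _ _).trans (by simp [hg]))))
    ((Nat.cast_le.mpr (Fintype.card_subtype_le _)).trans_lt hK)
  refine Polynomial.eq_zero_of_sum_C_mul_C_mul_X_add_C_pow_eq_zero hchoose hcard hα
    (β := fun i => eval w (g i)) (fun i hi => by simpa [sub_eq_zero] using hw ⟨i, hi⟩) ?_
  have h_line := congrArg (aeval fun j => Polynomial.C (v j) * Polynomial.X + Polynomial.C (w j)) h
  rw [map_sum, map_zero] at h_line
  simpa only [map_mul, map_pow, aeval_C, Polynomial.algebraMap_eq,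
    aeval_line_of_totalDegree_le_one (hg _).le] using h_line

theorem exists_smul_eq_of_sum_C_mul_pow_eq {ι κ : Type*} [Fintype ι] [Fintype κ]
    (hchoose : ∀ r ≤ d, (d.choose r : K) ≠ 0)
    (hK : ((Fintype.card ι + Fintype.card κ : ℕ) : Cardinal) < Cardinal.mk K)
    (hcard : Fintype.card ι + Fintype.card κ ≤ d + 1)
    {ℓ : ι → MvPolynomial σ K} {a : κ → MvPolynomial σ K} {c : ι → K} {c' : κ → K}
    (hℓ : ∀ i, (ℓ i).totalDegree = 1) (ha : ∀ j, (a j).totalDegree = 1)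
    (h : ∑ i, C (c i) * ℓ i ^ d = ∑ j, C (c' j) * a j ^ d)
    {i₀ : ι} (hi₀ : ∀ i ≠ i₀, ∀ t : K, ℓ i₀ ≠ t • ℓ i) (hc : c i₀ ≠ 0) :
    ∃ j, ∃ t : K, t ≠ 0 ∧ ℓ i₀ = t • a j := by
  by_contra! hno
  refine hc (eq_zero_of_sum_C_mul_pow_eq_zero (g := Sum.elim ℓ a) (b := Sum.elim c (-c'))
    (i₀ := .inl i₀) hchoose (by simpa using hK) (by simpa using hcard) ?_ ?_ ?_)
  · rintro (i | j) <;> simp [hℓ, ha]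
  · rintro (i | j) hi t
    · exact hi₀ i (by simpa using hi) t
    · rcases eq_or_ne t 0 with rfl | ht
      · exact fun h0 => by simpa [show ℓ i₀ = 0 by simpa using h0] using hℓ i₀
      · exact hno j t ht
  · simp [Fintype.sum_sum_type, h]

end Field

end MvPolynomial

open MvPolynomial

theorem unique_minimal_sum_pow_general {F : Type*} [Field F] (n k d : ℕ)
    (hF : ((2 * k + 1 : ℕ) : Cardinal) ≤ Cardinal.mk F)
    (hchar : CharZero F ∨ d < ringChar F)
    (hd : 2 * k + 1 ≤ d)
    (ℓ a : Fin k → MvPolynomial (Fin n) F)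
    (c c' : Fin k → F)
    (hdegℓ : ∀ i, (ℓ i).totalDegree = 1)
    (hdega : ∀ i, (a i).totalDegree = 1)
    (hc : ∀ i, c i ≠ 0)
    (hpairℓ : ∀ i j, i ≠ j → ∀ t : F, ℓ i ≠ t • ℓ j)
    (heq : (∑ i, MvPolynomial.C (c i) * (ℓ i) ^ d) = ∑ i, MvPolynomial.C (c' i) * (a i) ^ d) :
    ∃ π : Equiv.Perm (Fin k), ∀ i, ∃ t : F, t ≠ 0 ∧ ℓ i = t • a (π i) := by
  have hK : ((Fintype.card (Fin k) + Fintype.card (Fin k) : ℕ) : Cardinal) < Cardinal.mk F :=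
    Cardinal.natCast_add_one_le_iff.mp (by simpa [two_mul] using hF)
  choose π t ht hπ using fun i => exists_smul_eq_of_sum_C_mul_pow_eq
    (fun r hr => Nat.cast_choose_ne_zero hchar hr) hK
    (by simp only [Fintype.card_fin]; omega) hdegℓ hdega heq
    (fun j hj t => hpairℓ i j hj.symm t) (hc i)
  have hπ_inj : Function.Injective π := fun i j hij => by
    by_contra hne
    exact hpairℓ i j hne (t i / t j) (by rw [hπ i, hij, hπ j, smul_smul, div_mul_cancel₀ _ (ht j)])
  exact ⟨Equiv.ofBijective π (Finite.injective_iff_bijective.mp hπ_inj),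
    fun i => ⟨t i, ht i, hπ i⟩⟩

/-- Uniqueness of minimal representations of a polynomial as a sum of `k`
`d`-th powers of degree-1 polynomials: if `|F| ≥ 2k+1`, `char F = 0` or `char F > d`,
`d ≥ 2k+1`, and `∑ i, c i • ℓ i ^ d = ∑ i, c' i • a i ^ d` are two minimal representations,
then there is a permutation `π` matching each `ℓ i` with a nonzero scalar multiple of
`a (π i)`. -/
theorem unique_minimal_sum_pow {F : Type*} [Field F] (n k d : ℕ)
    (hF : ((2 * k + 1 : ℕ) : Cardinal) ≤ Cardinal.mk F)
    (hchar : CharZero F ∨ d < ringChar F)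
    (hd : 2 * k + 1 ≤ d)
    (ℓ a : Fin k → MvPolynomial (Fin n) F)
    (c c' : Fin k → F)
    (hdegℓ : ∀ i, (ℓ i).totalDegree = 1)
    (hdega : ∀ i, (a i).totalDegree = 1)
    (hc : ∀ i, c i ≠ 0) (hc' : ∀ i, c' i ≠ 0)
    (hpairℓ : ∀ i j, i ≠ j → ∀ t : F, ℓ i ≠ t • ℓ j)
    (hpaira : ∀ i j, i ≠ j → ∀ t : F, a i ≠ t • a j)
    (heq : (∑ i, MvPolynomial.C (c i) * (ℓ i) ^ d) = ∑ i, MvPolynomial.C (c' i) * (a i) ^ d) :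
    ∃ π : Equiv.Perm (Fin k), ∀ i, ∃ t : F, t ≠ 0 ∧ ℓ i = t • a (π i) :=
  unique_minimal_sum_pow_general n k d hF hchar hd ℓ a c c' hdegℓ hdega hc hpairℓ heq
end
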